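/- arXiv:2605.17175 — 5 statements merged into one kernel-verified Lean document; each statement's English description precedes it below -/
import Mathlib

section
/- Let A be a complete lattice, J ⊆ A completely join-dense, M ⊆ A completely meet-dense, and let ◇ : A → A be completely join-preserving and □ : A → A be completely meet-preserving. Then for all u v : A, ◇ u ≤ □ v if and only if for all j ∈ J and m ∈ M, (j ≤ u ∧ v ≤ m) → ◇ j ≤ □ m. -/
theorem stmt_5 {A : Type*} [CompleteLattice A] (J M : Set A)
    (hJ : ∀ u : A, u = sSup {j | j ∈ J ∧ j ≤ u})
    (hM : ∀ u : A, u = sInf {m | m ∈ M ∧ u ≤ m})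
    (dia box : A → A)
    (hdia : ∀ S : Set A, dia (sSup S) = sSup (dia '' S))
    (hbox : ∀ S : Set A, box (sInf S) = sInf (box '' S)) :
    ∀ u v : A, dia u ≤ box v ↔
      ∀ j ∈ J, ∀ m ∈ M, (j ≤ u ∧ v ≤ m) → dia j ≤ box m := by
  have hdm : Monotone dia := by
    intro a b hab
    have : dia b = dia (sSup {a, b}) := by
      rw [sSup_pair, sup_eq_right.2 hab]
    rw [this, hdia]
    exact le_sSup ⟨a, Or.inl rfl, rfl⟩
  have hbm : Monotone box := by
    intro a b hab
    have : box a = box (sInf {a, b}) := by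
      rw [sInf_pair, inf_eq_left.2 hab]
    rw [this, hbox]
    exact sInf_le ⟨b, Or.inr rfl, rfl⟩
  intro u v
  constructor
  · intro h j hj m hm ⟨hju, hvm⟩
    exact le_trans (hdm hju) (le_trans h (hbm hvm))
  · intro h
    have h1 : dia u = sSup (dia '' {j | j ∈ J ∧ j ≤ u}) := by
      conv_lhs => rw [hJ u]
      exact hdia _
    have h2 : box v = sInf (box '' {m | m ∈ M ∧ v ≤ m}) := by
      conv_lhs => rw [hM v]
      exact hbox _
    rw [h1, h2]
    apply sSup_le
    rintro _ ⟨j, ⟨hj, hju⟩, rfl⟩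
    apply le_sInf
    rintro _ ⟨m, ⟨hm, hvm⟩, rfl⟩
    exact h j hj m hm ⟨hju, hvm⟩
end

section
/- Let A be a complete lattice and ◇, □ : A → A with ◇ completely join-preserving, □ completely meet-preserving, and let ◆ be the left adjoint of □ (◆ x ≤ y ↔ x ≤ □ y). Then the inequality ∀ p, ◇ (□ p) ≤ □ (◇ (□ p)) holds in A if and only if ∀ j m, ◇ (□ (◆ j)) ≤ m → ◇ j ≤ □ m holds in A. -/
theorem stmt_6 {A : Type*} [CompleteLattice A] (dia box bdia : A → A)
    (hdia : ∀ S : Set A, dia (sSup S) = sSup (dia '' S))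
    (hbox : ∀ S : Set A, box (sInf S) = sInf (box '' S))
    (hadj : ∀ x y : A, bdia x ≤ y ↔ x ≤ box y) :
    (∀ p : A, dia (box p) ≤ box (dia (box p))) ↔
      (∀ j m : A, dia (box (bdia j)) ≤ m → dia j ≤ box m) := by
  have boxmono : ∀ a b : A, a ≤ b → box a ≤ box b := by
    intro a b hab
    exact (hadj _ _).mp (le_trans ((hadj _ _).mpr le_rfl) hab)
  have diamono : ∀ a b : A, a ≤ b → dia a ≤ dia b := by
    intro a b hab
    have h := hdia {a, b}
    have : sSup ({a, b} : Set A) = b := by simp [sup_eq_right.mpr hab]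
    rw [this] at h
    rw [h]
    exact le_sSup ⟨a, by simp⟩
  constructor
  · intro H j m hjm
    have unit : j ≤ box (bdia j) := (hadj _ _).mp le_rfl
    calc dia j ≤ dia (box (bdia j)) := diamono _ _ unit
      _ ≤ box (dia (box (bdia j))) := H _
      _ ≤ box m := boxmono _ _ hjm
  · intro H p
    have counit : bdia (box p) ≤ p := (hadj _ _).mpr le_rfl
    exact H (box p) (dia (box p)) (diamono _ _ (boxmono _ _ counit))
end

section
/- Let A be a complete lattice with a completely join-preserving operation ◇ and a binary operation ∘ that preserves arbitrary joins in each coordinate, and a completely meet-preserving operation □. Then the inequality ∀ p, □(◇ p ∘ p) ∘ ◇ p ≤ p holds in A if and only if for all i j m : A, ( (∀ n, (∀ k h, k ≤ m → h ≤ m → ◇ k ∘ h ≤ n) → i ≤ □ n) ∧ j ≤ m ) → i ∘ ◇ j ≤ m. -/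
lemma mono_of_sSup' {A : Type*} [CompleteLattice A] (f : A → A)
    (hf : ∀ S : Set A, f (sSup S) = sSup (f '' S)) : Monotone f := by
  intro a b hab
  have h := hf {a, b}
  rw [Set.image_pair, sSup_pair, sSup_pair, sup_eq_right.mpr hab] at h
  exact h ▸ le_sup_left

lemma mono_of_sInf' {A : Type*} [CompleteLattice A] (f : A → A)
    (hf : ∀ S : Set A, f (sInf S) = sInf (f '' S)) : Monotone f := by
  intro a b hab
  have h := hf {a, b}
  rw [Set.image_pair, sInf_pair, sInf_pair, inf_eq_left.mpr hab] at h
  exact h ▸ inf_le_right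

theorem stmt_8 {A : Type*} [CompleteLattice A] (dia : A → A) (comp : A → A → A)
    (box : A → A)
    (hdia : ∀ S : Set A, dia (sSup S) = sSup (dia '' S))
    (hcomp₁ : ∀ (a : A) (S : Set A), comp (sSup S) a = sSup ((fun s => comp s a) '' S))
    (hcomp₂ : ∀ (a : A) (S : Set A), comp a (sSup S) = sSup ((fun s => comp a s) '' S))
    (hbox : ∀ S : Set A, box (sInf S) = sInf (box '' S)) :
    (∀ p : A, comp (box (comp (dia p) p)) (dia p) ≤ p) ↔
      ∀ i j m : A,
        ((∀ n : A, (∀ k h : A, k ≤ m → h ≤ m → comp (dia k) h ≤ n) → i ≤ box n) ∧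
          j ≤ m) → comp i (dia j) ≤ m := by
  have mdia : Monotone dia := mono_of_sSup' dia hdia
  have mbox : Monotone box := mono_of_sInf' box hbox
  have mcomp₁ : ∀ a : A, Monotone (fun s => comp s a) :=
    fun a => mono_of_sSup' _ (hcomp₁ a)
  have mcomp₂ : ∀ a : A, Monotone (fun s => comp a s) :=
    fun a => mono_of_sSup' _ (hcomp₂ a)
  constructor
  · intro H i j m ⟨h1, h2⟩
    have hi : i ≤ box (comp (dia m) m) := by
      apply h1
      intro k h hk hh
      exact le_trans (mcomp₁ h (mdia hk)) (mcomp₂ (dia m) hh)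
    calc comp i (dia j) ≤ comp (box (comp (dia m) m)) (dia j) := mcomp₁ _ hi
      _ ≤ comp (box (comp (dia m) m)) (dia m) := mcomp₂ _ (mdia h2)
      _ ≤ m := H m
  · intro H p
    apply H (box (comp (dia p) p)) p p
    refine ⟨fun n hn => mbox (hn p p le_rfl le_rfl), le_rfl⟩
end

section
/- Let A be a complete lattice with ◇ completely join-preserving and □ completely meet-preserving. Then ∀ p, p ≤ ◇□◇□◇ p holds in A if and only if for all j m : A, ( ∀ i, ( ∀ n, ( ∀ k, ( ∀ o, ◇ j ≤ o → k ≤ □ o ) → ◇ k ≤ n ) → i ≤ □ n ) → ◇ i ≤ m ) → j ≤ m. -/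
theorem stmt_9 {A : Type*} [CompleteLattice A] (dia box : A → A)
    (hdia : ∀ S : Set A, dia (sSup S) = sSup (dia '' S))
    (hbox : ∀ S : Set A, box (sInf S) = sInf (box '' S)) :
    (∀ p : A, p ≤ dia (box (dia (box (dia p))))) ↔
      ∀ j m : A,
        (∀ i : A,
          (∀ n : A,
            (∀ k : A,
              (∀ o : A, dia j ≤ o → k ≤ box o) → dia k ≤ n) → i ≤ box n) →
          dia i ≤ m) → j ≤ m := by
  have dmono : Monotone dia := by
    intro a b h
    have h2 := hdia {a, b}
    rw [Set.image_pair, sSup_pair, sSup_pair, sup_eq_right.mpr h] at h2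
    rw [h2]
    exact le_sup_left
  have bmono : Monotone box := by
    intro a b h
    have h2 := hbox {a, b}
    rw [Set.image_pair, sInf_pair, sInf_pair, inf_eq_left.mpr h] at h2
    rw [h2]
    exact inf_le_right
  constructor
  · intro H j m h
    refine le_trans (H j) (h _ ?_)
    intro n hn
    exact bmono (hn _ (fun o ho => bmono ho))
  · intro H p
    refine H p _ (fun i hi => ?_)
    exact dmono (hi _ (fun k hk => dmono (hk _ le_rfl)))
end

section
/- Let A be a complete lattice, ◇ : A → A completely join-preserving, and ⋆ : A → A → A completely meet-preserving in each coordinate. Then ∀ p, ◇ p ⋆ p ≤ p holds in A if and only if for all j m : A, ( ∀ n₁ n₂, ( (∀ k, k ≤ m → ◇ k ≤ n₁) ∧ (∀ h, h ≤ m → h ≤ n₂) ) → j ≤ n₁ ⋆ n₂ ) → j ≤ m. -/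
theorem stmt_10 {A : Type*} [CompleteLattice A] (dia : A → A) (star : A → A → A)
    (hdia : ∀ S : Set A, dia (sSup S) = sSup (dia '' S))
    (hstar₁ : ∀ (a : A) (S : Set A), star (sInf S) a = sInf ((fun s => star s a) '' S))
    (hstar₂ : ∀ (a : A) (S : Set A), star a (sInf S) = sInf ((fun s => star a s) '' S)) :
    (∀ p : A, star (dia p) p ≤ p) ↔
      ∀ j m : A,
        (∀ n₁ n₂ : A,
          ((∀ k : A, k ≤ m → dia k ≤ n₁) ∧ (∀ h : A, h ≤ m → h ≤ n₂)) →
          j ≤ star n₁ n₂) → j ≤ m := by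
  have dmono : ∀ a b : A, a ≤ b → dia a ≤ dia b := by
    intro a b hab
    have h : b = sSup {a, b} := by
      simp [sSup_insert, sup_eq_right.mpr hab]
    calc dia a ≤ sSup (dia '' {a, b}) := le_sSup ⟨a, by simp⟩
      _ = dia b := by rw [← hdia, ← h]
  have smono1 : ∀ (c a b : A), a ≤ b → star a c ≤ star b c := by
    intro c a b hab
    have h : a = sInf {a, b} := by
      simp [sInf_insert, inf_eq_left.mpr hab]
    calc star a c = sInf ((fun s => star s c) '' {a, b}) := by rw [← hstar₁, ← h]
      _ ≤ star b c := sInf_le ⟨b, by simp⟩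
  have smono2 : ∀ (c a b : A), a ≤ b → star c a ≤ star c b := by
    intro c a b hab
    have h : a = sInf {a, b} := by
      simp [sInf_insert, inf_eq_left.mpr hab]
    calc star c a = sInf ((fun s => star c s) '' {a, b}) := by rw [← hstar₂, ← h]
      _ ≤ star c b := sInf_le ⟨b, by simp⟩
  constructor
  · intro hax j m hjm
    have := hjm (dia m) m ⟨fun k hk => dmono _ _ hk, fun h hh => hh⟩
    exact this.trans (hax m)
  · intro hrhs p
    refine hrhs (star (dia p) p) p ?_
    rintro n₁ n₂ ⟨h1, h2⟩
    exact (smono1 p _ _ (h1 p le_rfl)).trans (smono2 n₁ _ _ (h2 p le_rfl))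
end
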